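/- Tropical determinant is attained: for every n×n real matrix O there exists a permutation σ ∈ S_n with ∑_i o_{i,σ(i)} = |O|_t, and for any matrix B over the Puiseux series field with T(b_{ij}) = o_{ij}, the order of det(B) satisfies ord(det B) ≥ -|O|_t, with equality iff the pseudo-determinant Δ_O(Pc(B)) ≠ 0 (where Pc(B) is the matrix of principal coefficients), equivalently T(det B) ≤ |O|_t when det B ≠ 0. -/

import Mathlib

/-- Tropicalization map on the field of (generalized) Puiseux series
`HahnSeries ℝ ℂ`: `T x = - ord x`. -/
noncomputable def T (x : HahnSeries ℝ ℂ) : ℝ := -x.order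

/-- Principal coefficient: the coefficient of the lowest-order term. -/
noncomputable def Pc (x : HahnSeries ℝ ℂ) : ℂ := x.coeff x.order

/-- Tropical determinant of a real square matrix. -/
noncomputable def tropDet {n : ℕ} (O : Matrix (Fin n) (Fin n) ℝ) : ℝ :=
  Finset.univ.sup' Finset.univ_nonempty (fun σ : Equiv.Perm (Fin n) => ∑ i, O i (σ i))

/-- Pseudo-determinant of `A` with respect to the tropical matrix `O`. -/
noncomputable def pseudoDet {n : ℕ} {R : Type*} [CommRing R]
    (O : Matrix (Fin n) (Fin n) ℝ) (A : Matrix (Fin n) (Fin n) R) : R :=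
  ∑ σ ∈ Finset.univ.filter
      (fun σ : Equiv.Perm (Fin n) => ∑ i, O i (σ i) = tropDet O),
    (Equiv.Perm.sign σ : ℤ) • ∏ i, A i (σ i)

/-!
The determinant is the signed sum over permutations `σ` of `∏ i, B i (σ i)`, a product of nonzero
Hahn series of order `-∑ i, O i (σ i) ≥ -tropDet O`. Hence no term has a coefficient below
`-tropDet O`, and at `-tropDet O` exactly the maximizing permutations contribute, each with the
product of the principal coefficients: the coefficient of `det B` there is the pseudo-determinant.
-/

open Finset Equiv

namespace HahnSeries

theorem coeff_sum_zsmul_of_le_order {Γ V ι : Type*} [LinearOrder Γ] [Zero Γ] [AddCommGroup V]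
    (s : Finset ι) (c : ι → ℤ) (f : ι → HahnSeries Γ V) {r : Γ}
    (hr : ∀ i ∈ s, r ≤ (f i).order) :
    (∑ i ∈ s, c i • f i).coeff r = ∑ i ∈ s with (f i).order = r, c i • (f i).leadingCoeff := by
  rw [coeff_sum, sum_filter]
  refine sum_congr rfl fun i hi => ?_
  rw [coeff_smul]
  split_ifs with h
  · rw [← h, leadingCoeff_eq]
  · rw [coeff_eq_zero_of_lt_order (lt_of_le_of_ne (hr i hi) (Ne.symm h)), smul_zero]

theorem coeff_ne_zero_iff_of_forall_lt_coeff_eq_zero {Γ V : Type*} [LinearOrder Γ] [Zero Γ]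
    [Zero V] {x : HahnSeries Γ V} {r : Γ} (h : ∀ j < r, x.coeff j = 0) :
    x.coeff r ≠ 0 ↔ x ≠ 0 ∧ x.order = r := by
  constructor
  · intro hr
    have hx : x ≠ 0 := ne_zero_of_coeff_ne_zero hr
    exact ⟨hx, (order_le_of_coeff_ne_zero hr).antisymm ((le_order_iff_forall hx).mpr h)⟩
  · rintro ⟨hx, rfl⟩
    rwa [← leadingCoeff_eq, leadingCoeff_ne_zero]

section Product

variable {Γ R ι : Type*} [AddCommMonoid Γ] [LinearOrder Γ] [IsOrderedCancelAddMonoid Γ]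
  [CommSemiring R] [NoZeroDivisors R]

theorem leadingCoeff_prod (s : Finset ι) (f : ι → HahnSeries Γ R) :
    (∏ i ∈ s, f i).leadingCoeff = ∏ i ∈ s, (f i).leadingCoeff := by
  induction s using Finset.cons_induction with
  | empty => simp
  | cons a s ha ih => rw [prod_cons, prod_cons, leadingCoeff_mul, ih]

theorem order_prod [Nontrivial R] (s : Finset ι) {f : ι → HahnSeries Γ R}
    (hf : ∀ i ∈ s, f i ≠ 0) : (∏ i ∈ s, f i).order = ∑ i ∈ s, (f i).order := by
  induction s using Finset.cons_induction with
  | empty => simp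
  | cons a s ha ih =>
    rw [forall_mem_cons] at hf
    rw [prod_cons, sum_cons, order_mul hf.1 (prod_ne_zero_iff.mpr hf.2), ih hf.2]

end Product

theorem coeff_det_of_le_order_sum {Γ R n : Type*} [AddCommMonoid Γ] [LinearOrder Γ]
    [IsOrderedCancelAddMonoid Γ] [CommRing R] [NoZeroDivisors R] [Nontrivial R]
    [Fintype n] [DecidableEq n] (B : Matrix n n (HahnSeries Γ R)) (hB : ∀ i j, B i j ≠ 0)
    {r : Γ} (hr : ∀ σ : Perm n, r ≤ ∑ i, (B i (σ i)).order) :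
    B.det.coeff r = ∑ σ : Perm n with ∑ i, (B i (σ i)).order = r,
      (Perm.sign σ : ℤ) • ∏ i, (B i (σ i)).leadingCoeff := by
  have horder (σ : Perm n) : (∏ i, B i (σ i)).order = ∑ i, (B i (σ i)).order :=
    order_prod _ fun i _ => hB i (σ i)
  have hdet : B.det = ∑ σ : Perm n, (Perm.sign σ : ℤ) • ∏ i, B i (σ i) := by
    rw [← Matrix.det_transpose, Matrix.det_apply]
    simp [Units.smul_def]
  simp_rw [hdet, coeff_sum_zsmul_of_le_order _ _ _ (fun σ _ => (horder σ).symm ▸ hr σ), horder,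
    leadingCoeff_prod]

end HahnSeries

theorem le_tropDet {n : ℕ} (O : Matrix (Fin n) (Fin n) ℝ) (σ : Perm (Fin n)) :
    ∑ i, O i (σ i) ≤ tropDet O :=
  le_sup' (fun σ : Perm (Fin n) => ∑ i, O i (σ i)) (mem_univ σ)

theorem exists_sum_eq_tropDet {n : ℕ} (O : Matrix (Fin n) (Fin n) ℝ) :
    ∃ σ : Perm (Fin n), ∑ i, O i (σ i) = tropDet O := by
  obtain ⟨σ, -, hσ⟩ := exists_mem_eq_sup' univ_nonempty fun σ : Perm (Fin n) => ∑ i, O i (σ i)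
  exact ⟨σ, hσ.symm⟩

section Tropicalization

variable {n : ℕ} {O : Matrix (Fin n) (Fin n) ℝ} {B : Matrix (Fin n) (Fin n) (HahnSeries ℝ ℂ)}

theorem sum_order_eq_neg_sum (hT : ∀ i j, T (B i j) = O i j) (σ : Perm (Fin n)) :
    ∑ i, (B i (σ i)).order = -∑ i, O i (σ i) := by
  simp [← hT, T]

theorem coeff_det_eq_zero_of_lt_neg_tropDet (hB : ∀ i j, B i j ≠ 0)
    (hT : ∀ i j, T (B i j) = O i j) {r : ℝ} (hr : r < -tropDet O) : B.det.coeff r = 0 := by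
  have hle (σ : Perm (Fin n)) : r < ∑ i, (B i (σ i)).order := by
    rw [sum_order_eq_neg_sum hT]; linarith [le_tropDet O σ]
  rw [HahnSeries.coeff_det_of_le_order_sum B hB fun σ => (hle σ).le, filter_false_of_mem
    fun σ _ => (hle σ).ne', sum_empty]

theorem coeff_det_neg_tropDet_eq_pseudoDet (hB : ∀ i j, B i j ≠ 0) (hT : ∀ i j, T (B i j) = O i j) :
    B.det.coeff (-tropDet O) = pseudoDet O (Matrix.of fun i j => Pc (B i j)) := by
  rw [HahnSeries.coeff_det_of_le_order_sum B hB fun σ => by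
    rw [sum_order_eq_neg_sum hT]; linarith [le_tropDet O σ]]
  simp [pseudoDet, sum_order_eq_neg_sum hT, Pc, HahnSeries.leadingCoeff_eq]

end Tropicalization

theorem tropDet_attained_and_order_bound {n : ℕ} (O : Matrix (Fin n) (Fin n) ℝ) :
    (∃ σ : Equiv.Perm (Fin n), ∑ i, O i (σ i) = tropDet O) ∧
    ∀ B : Matrix (Fin n) (Fin n) (HahnSeries ℝ ℂ),
      (∀ i j, B i j ≠ 0) → (∀ i j, T (B i j) = O i j) →
      (B.det ≠ 0 → T B.det ≤ tropDet O) ∧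
      (pseudoDet O (Matrix.of fun i j => Pc (B i j)) ≠ 0 ↔
        (B.det ≠ 0 ∧ T B.det = tropDet O)) := by
  refine ⟨exists_sum_eq_tropDet O, fun B hB hT => ?_⟩
  have hlow : ∀ r < -tropDet O, B.det.coeff r = 0 :=
    fun r => coeff_det_eq_zero_of_lt_neg_tropDet hB hT
  refine ⟨fun hdet => ?_, ?_⟩
  · have hord := (HahnSeries.le_order_iff_forall hdet).mpr hlow
    rw [T]
    linarith
  · rw [← coeff_det_neg_tropDet_eq_pseudoDet hB hT,
      HahnSeries.coeff_ne_zero_iff_of_forall_lt_coeff_eq_zero hlow, T, neg_eq_iff_eq_neg]
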